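/- In the braid group of type G₂, i.e. the group with presentation ⟨σ₁, σ₂ ∣ (σ₁σ₂)³ = (σ₂σ₁)³⟩ (equivalently σ₁σ₂σ₁σ₂σ₁σ₂ = σ₂σ₁σ₂σ₁σ₂σ₁), the center equals the cyclic subgroup generated by the element Δ_G = (σ₁σ₂)³. -/

import Mathlib

/-!
Sending `σ₁ ↦ t`, `σ₂ ↦ t⁻¹ s` maps the braid group onto `⟨s⟩ ∗ ⟨t⟩ ≅ ℤ/3 ∗ ℤ`; the relation holds
because `σ₁σ₂ ↦ s` and `σ₂σ₁ ↦ t⁻¹ s t` both have cube `1`. Conversely `s ↦ σ₁σ₂`, `t ↦ σ₁` is a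
homomorphism from `ℤ/3 ∗ ℤ` to the quotient by the central subgroup `⟨Δ⟩`, and composing the two
gives the projection, so the kernel of the first map lies in `⟨Δ⟩`. A free product of groups with
at least three elements each has trivial center: for a central `h ≠ 1` and a suitable letter `m`,
the reduced words of `m h` and `h m` represent the same element but begin or end in different
factors. Hence the center of the braid group maps to `1`, so it lies in `⟨Δ⟩`.
-/

/-- Relator of the braid group of type `G₂`: `(σ₁σ₂)³(σ₂σ₁)⁻³`. -/
def G2BraidRels : Set (FreeGroup (Fin 2)) :=
  { (FreeGroup.of 0 * FreeGroup.of 1) ^ 3 * ((FreeGroup.of 1 * FreeGroup.of 0) ^ 3)⁻¹ }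

namespace Monoid.CoprodI

variable {ι : Type*}

theorem Word.prod_injective {M : ι → Type*} [∀ i, Monoid (M i)] :
    Function.Injective (Word.prod : Word M → CoprodI M) := by
  classical exact Word.equiv.symm.injective

theorem NeWord.index_eq_of_prod_eq {M : ι → Type*} [∀ i, Monoid (M i)] {i j i' j' : ι}
    {w : NeWord M i j} {w' : NeWord M i' j'} (h : w.prod = w'.prod) : i = i' ∧ j = j' := by
  have hw : w.toList = w'.toList := congrArg Word.toList (Word.prod_injective h :)
  have hhead := congrArg List.head? hw
  have hlast := congrArg List.getLast? hw
  simp only [NeWord.toList_head?, NeWord.toList_getLast?, Option.some.injEq] at hhead hlast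
  exact ⟨congrArg Sigma.fst hhead, congrArg Sigma.fst hlast⟩

theorem center_eq_bot {G : ι → Type*} [∀ i, Group (G i)] [Nontrivial ι]
    (hG : ∀ i (x : G i), ∃ m, m ≠ 1 ∧ m ≠ x) : Subgroup.center (CoprodI G) = ⊥ := by
  classical
  refine (Subgroup.eq_bot_iff_forall _).2 fun h hh => by_contra fun hne => ?_
  obtain ⟨i, j, w, hw⟩ := NeWord.of_word (Word.equiv h) <| by
    rw [Ne, ← Equiv.eq_symm_apply]; exact hne
  have hwh : w.prod = h := by rw [NeWord.prod, hw]; exact Word.equiv.symm_apply_apply h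
  have comm : ∀ {k} (m : G k), of m * h = h * of m := fun m => Subgroup.mem_center_iff.1 hh (of m)
  by_cases hij : i = j
  · subst hij
    obtain ⟨k, hki⟩ := exists_ne i
    obtain ⟨m, hm, -⟩ := hG k 1
    have hidx := NeWord.index_eq_of_prod_eq (w := (NeWord.singleton m hm).append hki w)
      (w' := w.append hki.symm (NeWord.singleton m hm))
      (by simp only [NeWord.append_prod, NeWord.prod_singleton, hwh, comm])
    exact hki hidx.1
  · obtain ⟨m, hm, hmw⟩ := hG i w.head⁻¹
    have hmul : m * w.head ≠ 1 := fun h1 => hmw (eq_inv_of_mul_eq_one_left h1)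
    have hidx := NeWord.index_eq_of_prod_eq (w := w.mulHead m hmul)
      (w' := w.append (Ne.symm hij) (NeWord.singleton m hm))
      (by simp only [NeWord.mulHead_prod, NeWord.append_prod, NeWord.prod_singleton, hwh, comm])
    exact hij hidx.2.symm

end Monoid.CoprodI

theorem Subgroup.center_le_ker_of_surjective {G H : Type*} [Group G] [Group H] {f : G →* H}
    (hf : Function.Surjective f) (hH : Subgroup.center H = ⊥) : Subgroup.center G ≤ f.ker := by
  intro g hg
  rw [MonoidHom.mem_ker, ← Subgroup.mem_bot, ← hH, Subgroup.mem_center_iff]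
  intro y
  obtain ⟨x, rfl⟩ := hf y
  rw [← map_mul, ← map_mul, Subgroup.mem_center_iff.1 hg x]

theorem Subgroup.normal_of_le_center {G : Type*} [Group G] {N : Subgroup G}
    (h : N ≤ Subgroup.center G) : N.Normal :=
  ⟨fun n hn g => by rwa [Subgroup.mem_center_iff.1 (h hn) g, mul_inv_cancel_right]⟩

def zmodPowersHom {Q : Type*} [Group Q] (n : ℕ) (x : Q) (hx : x ^ n = 1) :
    Multiplicative (ZMod n) →* Q :=
  AddMonoidHom.toMultiplicativeLeft
    (ZMod.lift n ⟨zmultiplesHom (Additive Q) (Additive.ofMul x), by simp [← ofMul_pow, hx]⟩)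

theorem zmodPowersHom_ofAdd_one {Q : Type*} [Group Q] (n : ℕ) (x : Q) (hx : x ^ n = 1) :
    zmodPowersHom n x hx (.ofAdd 1) = x := by
  rw [zmodPowersHom, AddMonoidHom.toMultiplicativeLeft_apply_apply, toAdd_ofAdd, ← Int.cast_one,
    ZMod.lift_coe]
  simp

theorem commute_mul_pow_left_of_mul_pow_eq {M : Type*} [Monoid M] {a b : M} {n : ℕ}
    (h : (a * b) ^ n = (b * a) ^ n) : Commute ((a * b) ^ n) a := by
  rw [Commute, SemiconjBy, mul_pow_mul, h]

theorem commute_mul_pow_right_of_mul_pow_eq {M : Type*} [Monoid M] {a b : M} {n : ℕ}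
    (h : (a * b) ^ n = (b * a) ^ n) : Commute ((a * b) ^ n) b := by
  rw [Commute, SemiconjBy, h, mul_pow_mul, h]

namespace BraidG2

open Monoid

local notation "B" => PresentedGroup G2BraidRels
local notation "σ₁" => (PresentedGroup.of 0 : PresentedGroup G2BraidRels)
local notation "σ₂" => (PresentedGroup.of 1 : PresentedGroup G2BraidRels)
local notation "Δ" => (σ₁ * σ₂) ^ 3

theorem braid_rel : (σ₁ * σ₂) ^ 3 = (σ₂ * σ₁) ^ 3 := by
  have h := PresentedGroup.one_of_mem (rels := G2BraidRels) rfl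
  rw [map_mul, map_inv, map_pow, map_pow, map_mul, map_mul, mul_inv_eq_one] at h
  exact h

theorem delta_mem_center : Δ ∈ Subgroup.center B := by
  rw [← Subgroup.centralizer_univ, ← Subgroup.coe_top, ← PresentedGroup.closure_range_of,
    Subgroup.centralizer_closure, Subgroup.mem_centralizer_iff]
  rintro _ ⟨j, rfl⟩
  fin_cases j
  · exact (commute_mul_pow_left_of_mul_pow_eq braid_rel).symm
  · exact (commute_mul_pow_right_of_mul_pow_eq braid_rel).symm

-- `ZMod 0 = ℤ`, so `CoprodI Factor` is the free product `ℤ/3 ∗ ℤ`.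
abbrev Factor (i : Bool) : Type := Multiplicative (ZMod (cond i 3 0))

theorem factor_exists_ne (i : Bool) (x : Factor i) : ∃ m, m ≠ 1 ∧ m ≠ x := by
  cases i
  · by_cases hx : x = .ofAdd 1
    · exact ⟨.ofAdd 2, by decide, by rw [hx]; decide⟩
    · exact ⟨.ofAdd 1, by decide, Ne.symm hx⟩
  · revert x
    show ∀ x : Multiplicative (ZMod 3), ∃ m, m ≠ 1 ∧ m ≠ x
    decide

def gen (i : Bool) : CoprodI Factor := CoprodI.of (Multiplicative.ofAdd 1 : Factor i)

theorem gen_true_pow_three : gen true ^ 3 = 1 := by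
  rw [gen, ← map_pow, show (Multiplicative.ofAdd 1 : Factor true) ^ 3 = 1 by decide, map_one]

theorem of_mem_zpowers_gen {i : Bool} (m : Factor i) : CoprodI.of m ∈ Subgroup.zpowers (gen i) := by
  refine Subgroup.mem_zpowers_iff.2 ⟨(Multiplicative.toAdd m).cast, ?_⟩
  rw [gen, ← map_zpow, ← ofAdd_zsmul, zsmul_one, ZMod.intCast_zmod_cast]
  rfl

theorem map_rels_eq_one :
    ∀ r ∈ G2BraidRels, FreeGroup.lift ![gen false, (gen false)⁻¹ * gen true] r = 1 := by
  rintro _ rfl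
  have hconj : ((gen false)⁻¹ * gen true * gen false) ^ 3 = 1 := by
    simpa [gen_true_pow_three] using conj_pow (a := (gen false)⁻¹) (b := gen true) (i := 3)
  simp [hconj, gen_true_pow_three]

def toCoprodI : B →* CoprodI Factor := PresentedGroup.toGroup map_rels_eq_one

theorem toCoprodI_of_zero : toCoprodI σ₁ = gen false := PresentedGroup.toGroup.of _

theorem toCoprodI_of_one : toCoprodI σ₂ = (gen false)⁻¹ * gen true := PresentedGroup.toGroup.of _

theorem gen_mem_range_toCoprodI : ∀ i, gen i ∈ toCoprodI.range
  | false => ⟨σ₁, toCoprodI_of_zero⟩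
  | true => ⟨σ₁ * σ₂, by rw [map_mul, toCoprodI_of_zero, toCoprodI_of_one, mul_inv_cancel_left]⟩

theorem toCoprodI_surjective : Function.Surjective toCoprodI := by
  refine MonoidHom.range_eq_top.1 ((Subgroup.eq_top_iff' _).2 fun x => ?_)
  induction x using CoprodI.induction_on with
  | one => exact one_mem _
  | of i m => exact Subgroup.zpowers_le.2 (gen_mem_range_toCoprodI _) (of_mem_zpowers_gen m)
  | mul x y hx hy => exact mul_mem hx hy

instance : (Subgroup.zpowers Δ).Normal :=
  Subgroup.normal_of_le_center (Subgroup.zpowers_le.2 delta_mem_center)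

local notation "π" => QuotientGroup.mk' (Subgroup.zpowers ((σ₁ * σ₂) ^ 3))

theorem cond_mk_pow_cond_eq_one : ∀ i : Bool, cond i (π (σ₁ * σ₂)) (π σ₁) ^ cond i 3 0 = 1
  | false => pow_zero _
  | true => by
    rw [cond_true, ← map_pow, QuotientGroup.mk'_apply, QuotientGroup.eq_one_iff]
    exact Subgroup.mem_zpowers _

def coprodIToQuotient : CoprodI Factor →* B ⧸ Subgroup.zpowers Δ :=
  CoprodI.lift fun i => zmodPowersHom _ _ (cond_mk_pow_cond_eq_one i)

theorem coprodIToQuotient_gen (i : Bool) :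
    coprodIToQuotient (gen i) = cond i (π (σ₁ * σ₂)) (π σ₁) := by
  rw [coprodIToQuotient, gen, CoprodI.lift_of, zmodPowersHom_ofAdd_one]

theorem coprodIToQuotient_comp_toCoprodI : coprodIToQuotient.comp toCoprodI = π := by
  refine PresentedGroup.ext fun j => ?_
  fin_cases j
  · simp [toCoprodI_of_zero, coprodIToQuotient_gen]
  · simp [toCoprodI_of_one, coprodIToQuotient_gen]

end BraidG2

theorem stmt_16 :
    Subgroup.center (PresentedGroup G2BraidRels) =
      Subgroup.zpowers
        (((PresentedGroup.of 0 : PresentedGroup G2BraidRels) * PresentedGroup.of 1) ^ 3) := by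
  refine le_antisymm ?_ (Subgroup.zpowers_le.2 BraidG2.delta_mem_center)
  calc Subgroup.center _ ≤ BraidG2.toCoprodI.ker :=
        Subgroup.center_le_ker_of_surjective BraidG2.toCoprodI_surjective
          (Monoid.CoprodI.center_eq_bot BraidG2.factor_exists_ne)
    _ ≤ (BraidG2.coprodIToQuotient.comp BraidG2.toCoprodI).ker :=
        MonoidHom.ker_le_comap _ BraidG2.coprodIToQuotient.ker
    _ = _ := by rw [BraidG2.coprodIToQuotient_comp_toCoprodI, QuotientGroup.ker_mk']
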